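/- arXiv:2601.20593 — 7 statements merged into one kernel-verified Lean document; each statement's English description precedes it below -/
import Mathlib

section
/- Let (R, m, κ) be a discrete valuation ring containing a field k with fraction field K. Let φ = ⟨a₁, ..., aₙ⟩ be a diagonal quadratic form over k (all aᵢ ∈ k*). If φ is isotropic over K, then φ is isotropic over the residue field κ. -/
/-! A nonzero isotropic vector over `K` can be rescaled, dividing by a coordinate that
divides all the others in the valuation ring `R`, into a vector with entries in `R` one of
which equals `1`. The form still vanishes on it, and its reduction modulo the maximal ideal
is a nonzero isotropic vector over `κ`. -/

open IsLocalRing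

section ValuationRing

variable {R : Type*} [CommRing R] [IsDomain R] [ValuationRing R]
  {K : Type*} [Field K] [Algebra R K] [IsFractionRing R K]

theorem ValuationRing.exists_isInteger_div {ι : Type*} [Finite ι] {y : ι → K} (hy : y ≠ 0) :
    ∃ j, y j ≠ 0 ∧ ∀ i, IsLocalization.IsInteger R (y i / y j) := by
  cases nonempty_fintype ι
  set v := ValuationRing.valuation R K
  obtain ⟨i₀, hi₀⟩ := Function.ne_iff.mp hy
  obtain ⟨j, -, hj⟩ := Finset.univ.exists_max_image (fun i => v (y i)) ⟨i₀, Finset.mem_univ _⟩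
  have hvj : 0 < v (y j) :=
    lt_of_lt_of_le (zero_lt_iff.mpr ((v.ne_zero_iff).mpr hi₀)) (hj i₀ (Finset.mem_univ _))
  have hyj : y j ≠ 0 := v.ne_zero_iff.mp hvj.ne'
  refine ⟨j, hyj, fun i => (ValuationRing.mem_integer_iff R K _).mp ?_⟩
  rw [Valuation.mem_integer_iff, map_div₀, div_le_one₀ hvj]
  exact hj i (Finset.mem_univ _)

theorem ValuationRing.exists_residue_isotropic {ι : Type*} [Fintype ι] (A : ι → R) (d : ℕ)
    {y : ι → K} (hy : y ≠ 0) (h : ∑ i, algebraMap R K (A i) * y i ^ d = 0) :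
    ∃ z : ι → ResidueField R, z ≠ 0 ∧ ∑ i, residue R (A i) * z i ^ d = 0 := by
  obtain ⟨j, hyj, hint⟩ := ValuationRing.exists_isInteger_div (R := R) hy
  choose r hr using hint
  have hrj : r j = 1 :=
    IsFractionRing.injective R K (by rw [hr, div_self hyj, map_one])
  have hsum : ∑ i, A i * r i ^ d = 0 := by
    apply IsFractionRing.injective R K
    calc algebraMap R K (∑ i, A i * r i ^ d)
        = (∑ i, algebraMap R K (A i) * y i ^ d) / y j ^ d := by
          simp only [map_sum, map_mul, map_pow, hr, div_pow, Finset.sum_div, mul_div_assoc]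
      _ = algebraMap R K 0 := by rw [h, zero_div, map_zero]
  refine ⟨fun i => residue R (r i), Function.ne_iff.mpr ⟨j, by simp [hrj]⟩, ?_⟩
  simpa only [map_sum, map_mul, map_pow, map_zero] using congrArg (residue R) hsum

end ValuationRing

theorem stmt_0_general (R : Type*) [CommRing R] [IsDomain R] [IsDiscreteValuationRing R]
    (k : Type*) [Field k] [Algebra k R]
    (K : Type*) [Field K] [Algebra R K] [IsFractionRing R K]
    {n : ℕ} (a : Fin n → k)
    (hK : ∃ y : Fin n → K, y ≠ 0 ∧
        ∑ i, algebraMap R K (algebraMap k R (a i)) * y i ^ 2 = 0) :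
    ∃ z : Fin n → IsLocalRing.ResidueField R, z ≠ 0 ∧
      ∑ i, IsLocalRing.residue R (algebraMap k R (a i)) * z i ^ 2 = 0 := by
  obtain ⟨y, hy, hsum⟩ := hK
  exact ValuationRing.exists_residue_isotropic _ 2 hy hsum

/-- If a diagonal quadratic form over `k ⊆ R` (R a DVR with fraction
field `K` and residue field `κ`) is isotropic over `K`, then it is isotropic over `κ`. -/
theorem stmt_0 (R : Type*) [CommRing R] [IsDomain R] [IsDiscreteValuationRing R]
    (k : Type*) [Field k] [Algebra k R]
    (K : Type*) [Field K] [Algebra R K] [IsFractionRing R K]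
    {n : ℕ} (a : Fin n → k) (ha : ∀ i, a i ≠ 0)
    (hK : ∃ y : Fin n → K, y ≠ 0 ∧
        ∑ i, algebraMap R K (algebraMap k R (a i)) * y i ^ 2 = 0) :
    ∃ z : Fin n → IsLocalRing.ResidueField R, z ≠ 0 ∧
      ∑ i, IsLocalRing.residue R (algebraMap k R (a i)) * z i ^ 2 = 0 :=
  stmt_0_general R k K a hK
end

section
/- Let (R, m, κ) be a discrete valuation ring containing a field k, with fraction field K and valuation v. Let φ = ⟨a₁,...,aₙ⟩ be a diagonal quadratic form with coefficients aᵢ ∈ k* whose reduction to κ is anisotropic. Then for any elements y₁,...,yₙ ∈ K not all zero, v(a₁y₁² + ... + aₙyₙ²) = min{v(yᵢ²) : 1 ≤ i ≤ n}; in particular this valuation is even. -/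
attribute [local instance] Classical.propDecidable

/-!
Rescale by the entry `y j` of least valuation: every `y i / y j` is then integral, so
`∑ aᵢ yᵢ² = y j² · T` with `T = ∑ aᵢ (yᵢ / y j)² ∈ R`. The residues of the ratios are not all
zero (the `j`-th is `1`), so anisotropy of the reduced form says that `T` has nonzero residue, i.e. `T` is a unit and `v T = 0`; hence the
valuation of the sum is `v (y j²) = 2 v (y j)`, the minimum of the `v (yᵢ²)`.
-/

open IsLocalRing

theorem residue_sum_mul_sq_ne_zero {R : Type*} [CommRing R] [IsLocalRing R]
    {ι : Type*} [Fintype ι] {A : ι → R}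
    (haniso : ∀ z : ι → ResidueField R, ∑ i, residue R (A i) * z i ^ 2 = 0 → z = 0)
    {r : ι → R} {j : ι} (hj : residue R (r j) ≠ 0) :
    residue R (∑ i, A i * r i ^ 2) ≠ 0 := by
  intro h
  refine hj (congrFun (haniso (fun i => residue R (r i)) ?_) j)
  simpa only [map_sum, map_mul, map_pow] using h

section Valuation

variable {R K : Type*} [CommRing R] [Field K] [Algebra R K] {v : K → ℤ}

theorem val_div (hvmul : ∀ x y : K, x ≠ 0 → y ≠ 0 → v (x * y) = v x + v y)
    {x z : K} (hx : x ≠ 0) (hz : z ≠ 0) : v (x / z) = v x - v z := by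
  have h := hvmul (x / z) z (div_ne_zero hx hz) hz
  rw [div_mul_cancel₀ x hz] at h
  omega

theorem val_sq (hvmul : ∀ x y : K, x ≠ 0 → y ≠ 0 → v (x * y) = v x + v y)
    {x : K} (hx : x ≠ 0) : v (x ^ 2) = 2 * v x := by
  rw [sq, hvmul x x hx hx, two_mul]

theorem exists_algebraMap_mul_eq_of_val_le
    (hvmul : ∀ x y : K, x ≠ 0 → y ≠ 0 → v (x * y) = v x + v y)
    (hvint : ∀ x : K, x ≠ 0 → (0 ≤ v x ↔ ∃ r : R, algebraMap R K r = x))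
    {x z : K} (hz : z ≠ 0) (hle : x ≠ 0 → v z ≤ v x) :
    ∃ r : R, algebraMap R K r * z = x := by
  by_cases hx : x = 0
  · exact ⟨0, by rw [hx, map_zero, zero_mul]⟩
  obtain ⟨r, hr⟩ := (hvint _ (div_ne_zero hx hz)).mp (by
    rw [val_div hvmul hx hz]
    linarith [hle hx])
  exact ⟨r, by rw [hr, div_mul_cancel₀ x hz]⟩

theorem val_algebraMap_eq_zero_of_residue_ne_zero [IsLocalRing R] [IsFractionRing R K]
    (hvint : ∀ x : K, x ≠ 0 → (0 ≤ v x ↔ ∃ r : R, algebraMap R K r = x))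
    (hvres : ∀ r : R, r ≠ 0 → (0 < v (algebraMap R K r) ↔ residue R r = 0))
    {T : R} (hT : residue R T ≠ 0) : v (algebraMap R K T) = 0 := by
  have hT0 : T ≠ 0 := fun h => hT (by rw [h, map_zero])
  have hTK : algebraMap R K T ≠ 0 :=
    (map_ne_zero_iff _ (IsFractionRing.injective R K)).mpr hT0
  have hnonneg : 0 ≤ v (algebraMap R K T) := (hvint _ hTK).mpr ⟨T, rfl⟩
  have hnpos : ¬ 0 < v (algebraMap R K T) := fun h => hT ((hvres T hT0).mp h)
  omega

theorem exists_sum_mul_sq_eq_sq_mul [IsLocalRing R] [IsFractionRing R K] {ι : Type*} [Fintype ι] {A : ι → R}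
    (hvmul : ∀ x y : K, x ≠ 0 → y ≠ 0 → v (x * y) = v x + v y)
    (hvint : ∀ x : K, x ≠ 0 → (0 ≤ v x ↔ ∃ r : R, algebraMap R K r = x))
    (haniso : ∀ z : ι → ResidueField R, ∑ i, residue R (A i) * z i ^ 2 = 0 → z = 0)
    {y : ι → K} {j : ι} (hyj : y j ≠ 0) (hmin : ∀ i, y i ≠ 0 → v (y j) ≤ v (y i)) :
    ∃ T : R, residue R T ≠ 0 ∧
      ∑ i, algebraMap R K (A i) * y i ^ 2 = y j ^ 2 * algebraMap R K T := by
  choose r hr using fun i => exists_algebraMap_mul_eq_of_val_le hvmul hvint hyj (hmin i)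
  have hrj : r j = 1 := IsFractionRing.injective R K <| by
    rw [map_one, ← mul_left_inj' hyj, hr j, one_mul]
  refine ⟨∑ i, A i * r i ^ 2,
    residue_sum_mul_sq_ne_zero haniso (j := j) (by rw [hrj, map_one]; exact one_ne_zero), ?_⟩
  rw [map_sum, Finset.mul_sum]
  refine Finset.sum_congr rfl fun i _ => ?_
  rw [← hr i]
  simp only [map_mul, map_pow]
  ring

end Valuation

theorem stmt_1_general (R : Type*) [CommRing R] [IsDomain R] [IsDiscreteValuationRing R]
    (k : Type*) [Field k] [Algebra k R]
    (K : Type*) [Field K] [Algebra R K] [IsFractionRing R K]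
    (v : K → ℤ)
    (hvmul : ∀ x y : K, x ≠ 0 → y ≠ 0 → v (x * y) = v x + v y)
    (hvint : ∀ x : K, x ≠ 0 → (0 ≤ v x ↔ ∃ r : R, algebraMap R K r = x))
    (hvres : ∀ r : R, r ≠ 0 →
      (0 < v (algebraMap R K r) ↔ IsLocalRing.residue R r = 0))
    {n : ℕ} (a : Fin n → k)
    (haniso : ∀ z : Fin n → IsLocalRing.ResidueField R,
      ∑ i, IsLocalRing.residue R (algebraMap k R (a i)) * z i ^ 2 = 0 → z = 0)
    (y : Fin n → K) (hy : y ≠ 0) :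
    (∑ i, algebraMap R K (algebraMap k R (a i)) * y i ^ 2) ≠ 0 ∧
    ((v (∑ i, algebraMap R K (algebraMap k R (a i)) * y i ^ 2) : WithTop ℤ) =
      Finset.univ.inf fun i =>
        if y i = 0 then (⊤ : WithTop ℤ) else (v (y i ^ 2) : WithTop ℤ)) ∧
    Even (v (∑ i, algebraMap R K (algebraMap k R (a i)) * y i ^ 2)) := by
  obtain ⟨j, hjmem, hjmin⟩ := Finset.exists_min_image {i | y i ≠ 0} (fun i => v (y i))
    (by simpa [Finset.Nonempty, funext_iff] using hy)
  have hyj : y j ≠ 0 := (Finset.mem_filter.mp hjmem).2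
  have hmin : ∀ i, y i ≠ 0 → v (y j) ≤ v (y i) := fun i hi => hjmin i (by simpa using hi)
  obtain ⟨T, hT, hsum⟩ := exists_sum_mul_sq_eq_sq_mul hvmul hvint haniso hyj hmin
  have hvT := val_algebraMap_eq_zero_of_residue_ne_zero hvint hvres hT
  have hTK : algebraMap R K T ≠ 0 :=
    (map_ne_zero_iff _ (IsFractionRing.injective R K)).mpr fun h => hT (by rw [h, map_zero])
  have hval : v (∑ i, algebraMap R K (algebraMap k R (a i)) * y i ^ 2) = 2 * v (y j) := by
    rw [hsum, hvmul _ _ (pow_ne_zero 2 hyj) hTK, hvT, add_zero, val_sq hvmul hyj]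
  refine ⟨hsum ▸ mul_ne_zero (pow_ne_zero 2 hyj) hTK, ?_, hval ▸ even_two_mul _⟩
  rw [hval]
  refine le_antisymm (Finset.le_inf fun i _ => ?_) ?_
  · split_ifs with hi
    · exact le_top
    · rw [val_sq hvmul hi, WithTop.coe_le_coe]
      linarith [hmin i hi]
  · refine (Finset.inf_le (Finset.mem_univ j)).trans_eq ?_
    rw [if_neg hyj, val_sq hvmul hyj]

/-- If the reduction of the diagonal form `⟨a₁,…,aₙ⟩` to the residue field
is anisotropic, then for `y₁,…,yₙ ∈ K` not all zero,
`v(∑ aᵢ yᵢ²) = min {v(yᵢ²)}` (the min taken in `WithTop ℤ`, zero entries contributing `⊤`),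
and in particular this valuation is even. -/
theorem stmt_1 (R : Type*) [CommRing R] [IsDomain R] [IsDiscreteValuationRing R]
    (k : Type*) [Field k] [Algebra k R]
    (K : Type*) [Field K] [Algebra R K] [IsFractionRing R K]
    (v : K → ℤ)
    (hv0 : v 0 = 0)
    (hvmul : ∀ x y : K, x ≠ 0 → y ≠ 0 → v (x * y) = v x + v y)
    (hvadd : ∀ x y : K, x ≠ 0 → y ≠ 0 → x + y ≠ 0 → min (v x) (v y) ≤ v (x + y))
    (hvint : ∀ x : K, x ≠ 0 → (0 ≤ v x ↔ ∃ r : R, algebraMap R K r = x))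
    (hvres : ∀ r : R, r ≠ 0 →
      (0 < v (algebraMap R K r) ↔ IsLocalRing.residue R r = 0))
    {n : ℕ} (hn : 0 < n) (a : Fin n → k) (ha : ∀ i, a i ≠ 0)
    (haniso : ∀ z : Fin n → IsLocalRing.ResidueField R,
      ∑ i, IsLocalRing.residue R (algebraMap k R (a i)) * z i ^ 2 = 0 → z = 0)
    (y : Fin n → K) (hy : y ≠ 0) :
    (∑ i, algebraMap R K (algebraMap k R (a i)) * y i ^ 2) ≠ 0 ∧
    ((v (∑ i, algebraMap R K (algebraMap k R (a i)) * y i ^ 2) : WithTop ℤ) =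
      Finset.univ.inf fun i =>
        if y i = 0 then (⊤ : WithTop ℤ) else (v (y i ^ 2) : WithTop ℤ)) ∧
    Even (v (∑ i, algebraMap R K (algebraMap k R (a i)) * y i ^ 2)) :=
  stmt_1_general R k K v hvmul hvint hvres a haniso y hy
end

section
/- Let (R, m, κ) be a DVR containing a field k with fraction field K and valuation v. Let φ = ⟨a₁,...,aₙ⟩ be a diagonal quadratic form over k whose reduction to κ is anisotropic. Let D(φ_K) ⊆ K* be the set of nonzero values represented by φ over K, and let ⟨D(φ_K)⟩ be the subgroup of K* it generates. If g ∈ ⟨D(φ_K)⟩ and v(g) ≥ 0, then the image ḡ of g in κ satisfies: ḡ = 0 or ḡ lies in the subgroup of κ* generated by the nonzero values represented by φ over κ. -/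
/-!
Scaling a nonzero vector `y` over `K` by a power of a uniformizer `ϖ` gives a vector `w` over `R`
with a unit entry; anisotropy of the reduced form makes `φ(w)` a unit of `R` whose residue is a
value of `φ` over `κ`. So every value of `φ` over `K` lies in the subgroup of `Kˣ` generated by
`ϖ` and the units of `R` whose residues lie in `⟨D(φ_κ)⟩`. An element `u ϖ ^ m` of that subgroup
lying in `R` has `m ≥ 0`, so its residue is `0` or the residue of `u`.
-/

open IsLocalRing

def diagonalFormValues {F ι : Type*} [CommRing F] [Fintype ι] (b : ι → F) : Set Fˣ :=
  {d | ∃ y : ι → F, ∑ i, b i * y i ^ 2 = d}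

lemma exists_eq_mul_pow_of_algebraMap_eq_mul_zpow {R K : Type*} [CommRing R] [Field K]
    [Algebra R K] [IsFractionRing R K] {ϖ : R} (hϖ : Irreducible ϖ) {r : R} {u : Rˣ}
    {m : ℤ} (h : algebraMap R K r = algebraMap R K u * algebraMap R K ϖ ^ m) :
    ∃ k : ℕ, r = u * ϖ ^ k := by
  have hinj := IsFractionRing.injective R K
  obtain k | k := m
  · exact ⟨k, hinj (by simpa using h)⟩
  · have hπ : algebraMap R K ϖ ≠ 0 := by simpa using hϖ.ne_zero
    have hru : r * ϖ ^ (k + 1) = u := hinj <| by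
      rw [map_mul, map_pow, h, Int.negSucc_eq, zpow_neg, ← Int.natCast_succ, zpow_natCast,
        mul_assoc, inv_mul_cancel₀ (pow_ne_zero _ hπ), mul_one]
    have hdvd : ϖ ∣ u := (dvd_pow_self ϖ k.succ_ne_zero).trans (Dvd.intro_left r hru)
    exact (hϖ.not_isUnit (isUnit_of_dvd_unit hdvd u.isUnit)).elim

namespace IsDiscreteValuationRing

variable {R : Type*} [CommRing R] [IsDomain R] [IsDiscreteValuationRing R]
  {K : Type*} [Field K] [Algebra R K] [IsFractionRing R K] {ϖ : R}

lemma exists_eq_mul_zpow_of_ne_zero {ι : Type*} [Fintype ι] (hϖ : Irreducible ϖ)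
    {y : ι → K} (hy : y ≠ 0) :
    ∃ (M : ℤ) (w : ι → R), (∀ i, y i = algebraMap R K (w i) * algebraMap R K ϖ ^ M) ∧
      ∃ i, IsUnit (w i) := by
  classical
  have hπ : algebraMap R K ϖ ≠ 0 := by simpa using hϖ.ne_zero
  have hfactor : ∀ i, ∃ (m : ℤ) (u : Rˣ), y i ≠ 0 → y i = u • algebraMap R K ϖ ^ m := by
    intro i
    by_cases hi : y i = 0
    · exact ⟨0, 1, fun h => (h hi).elim⟩
    · obtain ⟨m, u, h⟩ := exists_units_eq_smul_zpow_of_irreducible hϖ hi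
      exact ⟨m, u, fun _ => h⟩
  choose m u hmu using hfactor
  have hS : (Finset.univ.filter (y · ≠ 0)).Nonempty := by
    obtain ⟨i, hi⟩ := Function.ne_iff.1 hy
    exact ⟨i, by simpa using hi⟩
  obtain ⟨i₀, hi₀, hmin⟩ := Finset.exists_min_image _ m hS
  refine ⟨m i₀, fun i => if y i = 0 then 0 else u i * ϖ ^ (m i - m i₀).toNat, fun i => ?_,
    i₀, by simp_all⟩
  by_cases hi : y i = 0
  · simp [hi]
  · have hexp : ((m i - m i₀).toNat : ℤ) = m i - m i₀ :=
      Int.toNat_of_nonneg (sub_nonneg.2 (hmin i (by simpa using hi)))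
    simp only [if_neg hi]
    rw [hmu i hi, Units.smul_def, Algebra.smul_def, map_mul, map_pow, mul_assoc,
      ← zpow_natCast, hexp, ← zpow_add₀ hπ, sub_add_cancel]

lemma exists_sum_mul_sq_eq_unit_mul_sq {ι : Type*} [Fintype ι] (hϖ : Irreducible ϖ)
    {b : ι → R} (hb : ∀ z : ι → ResidueField R, ∑ i, residue R (b i) * z i ^ 2 = 0 → z = 0)
    {y : ι → K} (hy : ∑ i, algebraMap R K (b i) * y i ^ 2 ≠ 0) :
    ∃ (s : Rˣ) (M : ℤ), ∑ i, algebraMap R K (b i) * y i ^ 2 =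
        algebraMap R K s * (algebraMap R K ϖ ^ M) ^ 2 ∧
      ∃ z : ι → ResidueField R, ∑ i, residue R (b i) * z i ^ 2 = residue R s := by
  have hy0 : y ≠ 0 := by
    rintro rfl
    simp at hy
  obtain ⟨M, w, hyw, i₀, hi₀⟩ := exists_eq_mul_zpow_of_ne_zero hϖ hy0
  set s := ∑ i, b i * w i ^ 2
  have hres : residue R s = ∑ i, residue R (b i) * residue R (w i) ^ 2 := by
    simp [s]
  have hs : IsUnit s := by
    refine (residue_ne_zero_iff_isUnit s).1 fun h => ?_
    have := congrFun (hb _ (hres ▸ h)) i₀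
    exact (residue_ne_zero_iff_isUnit _).2 hi₀ this
  refine ⟨hs.unit, M, ?_, _, hres.symm⟩
  simp only [IsUnit.unit_spec, s, hyw, map_sum, map_mul, map_pow, Finset.sum_mul]
  exact Finset.sum_congr rfl fun i _ => by ring

lemma mem_map_sup_zpowers_of_mem_diagonalFormValues {ι : Type*} [Fintype ι]
    (hϖ : Irreducible ϖ)
    {b : ι → R} (hb : ∀ z : ι → ResidueField R, ∑ i, residue R (b i) * z i ^ 2 = 0 → z = 0)
    {π : Kˣ} (hπ : (π : K) = algebraMap R K ϖ) {d : Kˣ}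
    (hd : d ∈ diagonalFormValues fun i => algebraMap R K (b i)) :
    d ∈ ((Subgroup.closure (diagonalFormValues fun i => residue R (b i))).comap
        (Units.map (residue R : R →* ResidueField R))).map (Units.map (algebraMap R K : R →* K)) ⊔
      Subgroup.zpowers π := by
  obtain ⟨y, hy⟩ := hd
  obtain ⟨s, M, hs, z, hz⟩ := exists_sum_mul_sq_eq_unit_mul_sq hϖ hb (hy ▸ d.ne_zero)
  refine Subgroup.mem_sup.2 ⟨Units.map _ s, ⟨s, Subgroup.subset_closure ⟨z, by simpa using hz⟩,
    rfl⟩, π ^ M * π ^ M, Subgroup.mul_mem _ (Subgroup.zpow_mem_zpowers π M)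
    (Subgroup.zpow_mem_zpowers π M), Units.ext ?_⟩
  simp only at hy
  rw [← hy, hs]
  simp [hπ, sq]

end IsDiscreteValuationRing

theorem stmt_2_general (R : Type*) [CommRing R] [IsDomain R] [IsDiscreteValuationRing R]
    (k : Type*) [Field k] [Algebra k R]
    (K : Type*) [Field K] [Algebra R K] [IsFractionRing R K]
    {n : ℕ} (a : Fin n → k)
    (haniso : ∀ z : Fin n → IsLocalRing.ResidueField R,
      ∑ i, IsLocalRing.residue R (algebraMap k R (a i)) * z i ^ 2 = 0 → z = 0)
    (g : Kˣ)
    (hg : g ∈ Subgroup.closure {d : Kˣ | ∃ y : Fin n → K,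
        ∑ i, algebraMap R K (algebraMap k R (a i)) * y i ^ 2 = (d : K)}) :
    ∀ r : R, algebraMap R K r = (g : K) →
      IsLocalRing.residue R r = 0 ∨
      ∃ u : (IsLocalRing.ResidueField R)ˣ,
        (u : IsLocalRing.ResidueField R) = IsLocalRing.residue R r ∧
        u ∈ Subgroup.closure {d : (IsLocalRing.ResidueField R)ˣ |
          ∃ z : Fin n → IsLocalRing.ResidueField R,
            ∑ i, IsLocalRing.residue R (algebraMap k R (a i)) * z i ^ 2 =
              (d : IsLocalRing.ResidueField R)} := by
  intro r hr
  obtain ⟨ϖ, hϖ⟩ := IsDiscreteValuationRing.exists_irreducible R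
  let π : Kˣ := Units.mk0 (algebraMap R K ϖ) (by simpa using hϖ.ne_zero)
  have hg' := (Subgroup.closure_le _).2
    (fun _ => IsDiscreteValuationRing.mem_map_sup_zpowers_of_mem_diagonalFormValues
      hϖ haniso (π := π) rfl) hg
  obtain ⟨_, ⟨u, hu, rfl⟩, _, ⟨m, rfl⟩, rfl⟩ := Subgroup.mem_sup.1 hg'
  obtain ⟨_ | j, rfl⟩ := exists_eq_mul_pow_of_algebraMap_eq_mul_zpow (K := K) hϖ (m := m)
    (by simpa [π] using hr)
  · exact Or.inr ⟨Units.map _ u, by simp, hu⟩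
  · left
    simp [hϖ.not_isUnit]

/-- If the reduction of `φ = ⟨a₁,…,aₙ⟩` to the residue field `κ` is
anisotropic, `g ∈ ⟨D(φ_K)⟩ ≤ Kˣ` and `v(g) ≥ 0`, then the reduction `ḡ ∈ κ` is `0`
or lies in the subgroup of `κˣ` generated by the nonzero values of `φ` over `κ`. -/
theorem stmt_2 (R : Type*) [CommRing R] [IsDomain R] [IsDiscreteValuationRing R]
    (k : Type*) [Field k] [Algebra k R]
    (K : Type*) [Field K] [Algebra R K] [IsFractionRing R K]
    (v : K → ℤ)
    (hv0 : v 0 = 0)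
    (hvmul : ∀ x y : K, x ≠ 0 → y ≠ 0 → v (x * y) = v x + v y)
    (hvadd : ∀ x y : K, x ≠ 0 → y ≠ 0 → x + y ≠ 0 → min (v x) (v y) ≤ v (x + y))
    (hvint : ∀ x : K, x ≠ 0 → (0 ≤ v x ↔ ∃ r : R, algebraMap R K r = x))
    (hvres : ∀ r : R, r ≠ 0 →
      (0 < v (algebraMap R K r) ↔ IsLocalRing.residue R r = 0))
    {n : ℕ} (a : Fin n → k) (ha : ∀ i, a i ≠ 0)
    (haniso : ∀ z : Fin n → IsLocalRing.ResidueField R,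
      ∑ i, IsLocalRing.residue R (algebraMap k R (a i)) * z i ^ 2 = 0 → z = 0)
    (g : Kˣ)
    (hg : g ∈ Subgroup.closure {d : Kˣ | ∃ y : Fin n → K,
        ∑ i, algebraMap R K (algebraMap k R (a i)) * y i ^ 2 = (d : K)})
    (hv : 0 ≤ v (g : K)) :
    ∀ r : R, algebraMap R K r = (g : K) →
      IsLocalRing.residue R r = 0 ∨
      ∃ u : (IsLocalRing.ResidueField R)ˣ,
        (u : IsLocalRing.ResidueField R) = IsLocalRing.residue R r ∧
        u ∈ Subgroup.closure {d : (IsLocalRing.ResidueField R)ˣ |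
          ∃ z : Fin n → IsLocalRing.ResidueField R,
            ∑ i, IsLocalRing.residue R (algebraMap k R (a i)) * z i ^ 2 =
              (d : IsLocalRing.ResidueField R)} :=
  stmt_2_general R k K a haniso g hg
end

section
/- Let (R, m, κ) be a DVR containing a field k with fraction field K and valuation v. Let φ = ⟨a₁,...,aₙ⟩ be a diagonal quadratic form over k whose reduction to κ is anisotropic, and let D(φ_K) ⊆ K* be the set of values represented by φ over K. Then every element h of D(φ_K) can be written as h = u·t^{2j} where u is a unit of R, t is a uniformizer of R, and j ∈ ℤ; i.e., v(h) is even for every h ∈ D(φ_K). -/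
/-!
Scale a representation `h = ∑ aᵢ yᵢ²` by a power of the uniformizer `t` so that the `yᵢ` become
integral with one of them a unit. The reduction of `∑ aᵢ yᵢ²` is then a value of the reduced form
at a nonzero vector, hence nonzero by anisotropy, so `h` is a unit times an even power of `t`.
-/

open IsLocalRing

theorem IsLocalRing.isUnit_sum_mul_sq_of_anisotropic {R : Type*} [CommRing R] [IsLocalRing R]
    {ι : Type*} [Fintype ι] {b : ι → R}
    (haniso : ∀ z : ι → ResidueField R, ∑ i, residue R (b i) * z i ^ 2 = 0 → z = 0)
    {z : ι → R} {i₀ : ι} (hz : IsUnit (z i₀)) : IsUnit (∑ i, b i * z i ^ 2) := by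
  rw [← residue_ne_zero_iff_isUnit]
  intro hsum
  have hres : (fun i => residue R (z i)) = 0 :=
    haniso _ (by simpa only [map_sum, map_mul, map_pow] using hsum)
  exact (residue_ne_zero_iff_isUnit _).2 hz (congrFun hres i₀)

namespace IsDiscreteValuationRing

variable {R : Type*} [CommRing R] [IsDomain R] [IsDiscreteValuationRing R]
  {K : Type*} [Field K] [Algebra R K] [IsFractionRing R K] {ι : Type*} [Fintype ι]

theorem exists_isUnit_apply_and_eq_mul_zpow {t : R} (ht : Irreducible t) {y : ι → K}
    (hy : y ≠ 0) : ∃ (M : ℤ) (z : ι → R), (∃ i, IsUnit (z i)) ∧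
      ∀ i, y i = algebraMap R K (z i) * algebraMap R K t ^ M := by
  classical
  have hT : algebraMap R K t ≠ 0 := by simpa using ht.ne_zero
  have hdec : ∀ i, ∃ (m : ℤ) (ε : Rˣ), y i ≠ 0 → y i = ε • algebraMap R K t ^ m := by
    intro i
    by_cases hi : y i = 0
    · exact ⟨0, 1, fun h => absurd hi h⟩
    · obtain ⟨m, ε, hm⟩ := exists_units_eq_smul_zpow_of_irreducible ht hi
      exact ⟨m, ε, fun _ => hm⟩
  choose m ε hε using hdec
  have hS : (Finset.univ.filter fun i => y i ≠ 0).Nonempty := by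
    obtain ⟨i, hi⟩ := Function.ne_iff.1 hy
    exact ⟨i, by simpa using hi⟩
  obtain ⟨i₀, hi₀, hmin⟩ := Finset.exists_min_image _ m hS
  refine ⟨m i₀, fun i => if y i = 0 then 0 else ε i * t ^ (m i - m i₀).toNat,
    ⟨i₀, ?_⟩, fun i => ?_⟩
  · simp only [Finset.mem_filter] at hi₀
    simp [hi₀.2]
  · by_cases hi : y i = 0
    · simp [hi]
    · have hle : m i₀ ≤ m i := hmin i (by simpa using hi)
      simp only [if_neg hi]
      rw [hε i hi, map_mul, map_pow, mul_assoc, ← zpow_natCast,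
        Int.toNat_of_nonneg (by omega), ← zpow_add₀ hT, sub_add_cancel, Units.smul_def,
        Algebra.smul_def]

theorem exists_eq_unit_mul_zpow_two_mul_of_anisotropic {t : R} (ht : Irreducible t) {b : ι → R}
    (haniso : ∀ z : ι → ResidueField R, ∑ i, residue R (b i) * z i ^ 2 = 0 → z = 0)
    {y : ι → K} (hne : ∑ i, algebraMap R K (b i) * y i ^ 2 ≠ 0) :
    ∃ (u : Rˣ) (j : ℤ),
      ∑ i, algebraMap R K (b i) * y i ^ 2 = algebraMap R K u * algebraMap R K t ^ (2 * j) := by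
  have hy : y ≠ 0 := by
    rintro rfl
    simp at hne
  obtain ⟨M, z, ⟨i₀, hi₀⟩, hyz⟩ := exists_isUnit_apply_and_eq_mul_zpow ht hy
  obtain ⟨u, hu⟩ := isUnit_sum_mul_sq_of_anisotropic haniso hi₀
  refine ⟨u, M, ?_⟩
  rw [hu, map_sum, Finset.sum_mul]
  refine Finset.sum_congr rfl fun i _ => ?_
  rw [hyz i, mul_comm 2 M, zpow_mul, zpow_ofNat, map_mul, map_pow]
  ring

end IsDiscreteValuationRing

theorem even_apply_unit_mul_zpow_two_mul {R : Type*} [CommRing R] [IsLocalRing R]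
    {K : Type*} [Field K] [Algebra R K] (v : K → ℤ)
    (hvmul : ∀ x y : K, x ≠ 0 → y ≠ 0 → v (x * y) = v x + v y)
    (hvint : ∀ x : K, x ≠ 0 → (0 ≤ v x ↔ ∃ r : R, algebraMap R K r = x))
    (hvres : ∀ r : R, r ≠ 0 → (0 < v (algebraMap R K r) ↔ residue R r = 0))
    (u : Rˣ) {x : K} (hx : x ≠ 0) (j : ℤ) : Even (v (algebraMap R K u * x ^ (2 * j))) := by
  have huK : algebraMap R K u ≠ 0 := (u.isUnit.map (algebraMap R K)).ne_zero
  have hvu : v (algebraMap R K u) = 0 := by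
    have hnonneg : 0 ≤ v (algebraMap R K u) := (hvint _ huK).2 ⟨u, rfl⟩
    have hnpos : ¬ 0 < v (algebraMap R K u) := by
      rw [hvres _ u.ne_zero]
      exact (residue_ne_zero_iff_isUnit _).2 u.isUnit
    omega
  have hxj : x ^ j ≠ 0 := zpow_ne_zero _ hx
  rw [mul_comm 2 j, zpow_mul, zpow_two, hvmul _ _ huK (mul_ne_zero hxj hxj),
    hvmul _ _ hxj hxj, hvu, zero_add]
  exact ⟨_, rfl⟩

theorem stmt_3_general (R : Type*) [CommRing R] [IsDomain R] [IsDiscreteValuationRing R]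
    (k : Type*) [Field k] [Algebra k R]
    (K : Type*) [Field K] [Algebra R K] [IsFractionRing R K]
    (v : K → ℤ)
    (hvmul : ∀ x y : K, x ≠ 0 → y ≠ 0 → v (x * y) = v x + v y)
    (hvint : ∀ x : K, x ≠ 0 → (0 ≤ v x ↔ ∃ r : R, algebraMap R K r = x))
    (hvres : ∀ r : R, r ≠ 0 →
      (0 < v (algebraMap R K r) ↔ IsLocalRing.residue R r = 0))
    {n : ℕ} (a : Fin n → k)
    (haniso : ∀ z : Fin n → IsLocalRing.ResidueField R,
      ∑ i, IsLocalRing.residue R (algebraMap k R (a i)) * z i ^ 2 = 0 → z = 0)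
    (h : K) (hne : h ≠ 0)
    (hrep : ∃ y : Fin n → K, ∑ i, algebraMap R K (algebraMap k R (a i)) * y i ^ 2 = h) :
    Even (v h) ∧
    ∀ t : R, Irreducible t → ∃ (u : Rˣ) (j : ℤ),
      h = algebraMap R K (u : R) * (algebraMap R K t) ^ (2 * j) := by
  obtain ⟨y, rfl⟩ := hrep
  have hunit := fun (t : R) (ht : Irreducible t) =>
    IsDiscreteValuationRing.exists_eq_unit_mul_zpow_two_mul_of_anisotropic ht haniso hne
  refine ⟨?_, hunit⟩
  obtain ⟨t, ht⟩ := IsDiscreteValuationRing.exists_irreducible R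
  obtain ⟨u, j, hj⟩ := hunit t ht
  rw [hj]
  exact even_apply_unit_mul_zpow_two_mul v hvmul hvint hvres u (by simpa using ht.ne_zero) j

/-- If the reduction of `φ = ⟨a₁,…,aₙ⟩` to the residue field is anisotropic,
then every nonzero value `h` represented by `φ` over `K` has even valuation; indeed
`h = u · t^(2j)` for any uniformizer `t`, with `u ∈ Rˣ` and `j ∈ ℤ`. -/
theorem stmt_3 (R : Type*) [CommRing R] [IsDomain R] [IsDiscreteValuationRing R]
    (k : Type*) [Field k] [Algebra k R]
    (K : Type*) [Field K] [Algebra R K] [IsFractionRing R K]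
    (v : K → ℤ)
    (hv0 : v 0 = 0)
    (hvmul : ∀ x y : K, x ≠ 0 → y ≠ 0 → v (x * y) = v x + v y)
    (hvadd : ∀ x y : K, x ≠ 0 → y ≠ 0 → x + y ≠ 0 → min (v x) (v y) ≤ v (x + y))
    (hvint : ∀ x : K, x ≠ 0 → (0 ≤ v x ↔ ∃ r : R, algebraMap R K r = x))
    (hvres : ∀ r : R, r ≠ 0 →
      (0 < v (algebraMap R K r) ↔ IsLocalRing.residue R r = 0))
    {n : ℕ} (a : Fin n → k) (ha : ∀ i, a i ≠ 0)
    (haniso : ∀ z : Fin n → IsLocalRing.ResidueField R,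
      ∑ i, IsLocalRing.residue R (algebraMap k R (a i)) * z i ^ 2 = 0 → z = 0)
    (h : K) (hne : h ≠ 0)
    (hrep : ∃ y : Fin n → K, ∑ i, algebraMap R K (algebraMap k R (a i)) * y i ^ 2 = h) :
    Even (v h) ∧
    ∀ t : R, Irreducible t → ∃ (u : Rˣ) (j : ℤ),
      h = algebraMap R K (u : R) * (algebraMap R K t) ^ (2 * j) :=
  stmt_3_general R k K v hvmul hvint hvres a haniso h hne hrep
end

section
/- Let k be a field of characteristic 0, φ an anisotropic quadratic form over k, and X the affine quadric x₁x₂ = φ(1, x₃,...,xₙ) in 𝔸ⁿ_k with φ = ⟨1⟩ ⊥ (-φ'). If f : 𝔸¹_k → X is a morphism with coordinate functions f₁,...,fₙ ∈ k[t], then for every closed point P of 𝔸¹_k at which φ remains anisotropic over the residue field κ(P), one has v_P(f₁) = v_P(f₂) = 0. In particular f₁ and f₂ are constants times units at all k-rational points, and f₁(t₀) and f₁(t₁) lie in the same coset of ⟨D(φ_k)⟩ in k* for all t₀, t₁ ∈ k. -/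
/-!
Modulo `p`, the relation `f₁ f₂ = φ(1, g)` says that `φ(1, ḡ)` vanishes in `k[t]/(p)` as soon as
`p ∣ f₁ f₂`, which anisotropy of `φ` over the residue field forbids. The same argument at the
`k`-points shows that `f₁` has no root in `k`.

For the coset statement we descend on `deg f₁`. Reducing the `gᵢ` modulo `f₁` gives `rᵢ` of degree
`< deg f₁` with `f₁ ∣ φ(1, r)`, say `φ(1, r) = f₁ f₂'`; then `deg f₂' < deg f₁`, and
`f₁(t₀)/f₁(t₁) = φ(1, r(t₀))/φ(1, r(t₁)) · (f₂'(t₀)/f₂'(t₁))⁻¹`, where the first factor lies in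
`⟨D(φ_k)⟩` and the second does by induction.
-/

open Polynomial

section Anisotropic

variable {ι R S : Type*} [Fintype ι] [CommRing R] [CommRing S]

lemma map_one_add_sum_mul_sq_ne_zero [Nontrivial S] (ψ : R →+* S) (c : ι → R)
    (haniso : ∀ (z0 : S) (z : ι → S),
      z0 ^ 2 + ∑ i, ψ (c i) * z i ^ 2 = 0 → z0 = 0 ∧ ∀ i, z i = 0)
    (g : ι → R) : ψ (1 + ∑ i, c i * g i ^ 2) ≠ 0 := by
  intro h
  refine one_ne_zero (haniso 1 (fun i => ψ (g i)) ?_).1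
  simpa using h

lemma not_dvd_one_add_sum_mul_sq {p : R} (hp : ¬IsUnit p) (c : ι → R)
    (haniso : ∀ (z0 : R ⧸ Ideal.span {p}) (z : ι → R ⧸ Ideal.span {p}),
      z0 ^ 2 + ∑ i, Ideal.Quotient.mk (Ideal.span {p}) (c i) * z i ^ 2 = 0 →
        z0 = 0 ∧ ∀ i, z i = 0)
    (g : ι → R) : ¬p ∣ 1 + ∑ i, c i * g i ^ 2 := by
  have : Nontrivial (R ⧸ Ideal.span {p}) :=
    Ideal.Quotient.nontrivial_iff.mpr (by rwa [Ne, Ideal.span_singleton_eq_top])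
  rw [← Ideal.mem_span_singleton, ← Ideal.Quotient.eq_zero_iff_mem]
  exact map_one_add_sum_mul_sq_ne_zero _ c haniso g

end Anisotropic

section Descent

variable {ι k : Type*} [Fintype ι] [Field k]

/-- `⟨D(φ_k)⟩` for `φ = ⟨1⟩ ⊥ ⟨b⟩`. -/
def valueSubgroup (b : ι → k) : Subgroup kˣ :=
  Subgroup.closure {d : kˣ | ∃ (z0 : k) (z : ι → k), z0 ^ 2 + ∑ i, b i * z i ^ 2 = (d : k)}

lemma eval_ne_zero_of_mul_eq {b : ι → k}
    (haniso : ∀ (z0 : k) (z : ι → k), z0 ^ 2 + ∑ i, b i * z i ^ 2 = 0 → z0 = 0 ∧ ∀ i, z i = 0)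
    {f1 f2 : k[X]} {g : ι → k[X]} (heq : f1 * f2 = 1 + ∑ i, C (b i) * g i ^ 2) (t : k) :
    f1.eval t ≠ 0 ∧ f2.eval t ≠ 0 := by
  have h := map_one_add_sum_mul_sq_ne_zero (evalRingHom t) (fun i => C (b i))
    (by simpa using haniso) g
  rw [← heq, map_mul] at h
  exact mul_ne_zero_iff.mp h

lemma exists_mul_eq_one_add_sum_of_natDegree_lt {b : ι → k} {f1 f2 : k[X]} {g : ι → k[X]}
    (heq : f1 * f2 = 1 + ∑ i, C (b i) * g i ^ 2) (hf1 : f1.natDegree ≠ 0) :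
    ∃ (f2' : k[X]) (r : ι → k[X]),
      f1 * f2' = 1 + ∑ i, C (b i) * r i ^ 2 ∧ f2'.natDegree < f1.natDegree := by
  let A : k[X] := 1 + ∑ i, C (b i) * (g i % f1) ^ 2
  have hdvd : f1 ∣ A := by
    have hmod : ∀ i, Ideal.Quotient.mk (Ideal.span {f1}) (g i % f1) =
        Ideal.Quotient.mk (Ideal.span {f1}) (g i) := fun i => by
      rw [Ideal.Quotient.eq, Ideal.mem_span_singleton, EuclideanDomain.mod_eq_sub_mul_div]
      exact ⟨-(g i / f1), by ring⟩
    rw [← Ideal.mem_span_singleton, ← Ideal.Quotient.eq_zero_iff_mem]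
    have h0 : Ideal.Quotient.mk (Ideal.span {f1}) (f1 * f2) = 0 :=
      Ideal.Quotient.eq_zero_iff_mem.mpr (Ideal.mem_span_singleton.mpr (dvd_mul_right _ _))
    simpa [A, hmod, heq] using h0
  obtain ⟨f2', hf2'⟩ := hdvd
  refine ⟨f2', fun i => g i % f1, hf2'.symm, ?_⟩
  have hA : A.natDegree ≤ 2 * (f1.natDegree - 1) := by
    refine (natDegree_add_le _ _).trans (max_le (by simp) ?_)
    refine natDegree_sum_le_of_forall_le _ _ fun i _ => ?_
    calc (C (b i) * (g i % f1) ^ 2).natDegree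
        ≤ ((g i % f1) ^ 2).natDegree := natDegree_C_mul_le _ _
      _ ≤ 2 * (g i % f1).natDegree := natDegree_pow_le
      _ ≤ 2 * (f1.natDegree - 1) := by have := natDegree_mod_lt (g i) hf1; omega
  rcases eq_or_ne f2' 0 with rfl | hf2'0
  · simpa using Nat.pos_of_ne_zero hf1
  · have hf10 : f1 ≠ 0 := by rintro rfl; simp at hf1
    have := natDegree_mul hf10 hf2'0
    rw [← hf2'] at this
    omega

lemma exists_unit_eq_eval_div_eval_mem_valueSubgroup {b : ι → k}
    (haniso : ∀ (z0 : k) (z : ι → k), z0 ^ 2 + ∑ i, b i * z i ^ 2 = 0 → z0 = 0 ∧ ∀ i, z i = 0)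
    {f1 f2 : k[X]} {g : ι → k[X]} (heq : f1 * f2 = 1 + ∑ i, C (b i) * g i ^ 2) (t0 t1 : k) :
    ∃ u : kˣ, (u : k) = f1.eval t0 / f1.eval t1 ∧ u ∈ valueSubgroup b := by
  induction hd : f1.natDegree using Nat.strong_induction_on generalizing f1 f2 g with
  | _ d ih =>
  rcases eq_or_ne d 0 with rfl | hd0
  · obtain ⟨a, rfl⟩ := natDegree_eq_zero.mp hd
    have ha : a ≠ 0 := by simpa using (eval_ne_zero_of_mul_eq haniso heq t0).1
    exact ⟨1, by simp [ha], one_mem _⟩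
  obtain ⟨f2', r, hr, hlt⟩ := exists_mul_eq_one_add_sum_of_natDegree_lt heq (hd ▸ hd0)
  obtain ⟨u', hu', hu'mem⟩ := ih _ (hd ▸ hlt) (mul_comm f2' f1 ▸ hr) rfl
  have hvalue (t : k) : Units.mk0 ((f1 * f2').eval t)
      (by rw [eval_mul]; exact mul_ne_zero_iff.mpr (eval_ne_zero_of_mul_eq haniso hr t)) ∈
        valueSubgroup b :=
    Subgroup.subset_closure ⟨1, fun i => (r i).eval t, by simp [hr, eval_finsetSum]⟩
  refine ⟨_ * _⁻¹ * u'⁻¹, ?_,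
    mul_mem (mul_mem (hvalue t0) (inv_mem (hvalue t1))) (inv_mem hu'mem)⟩
  obtain ⟨h0, h0'⟩ := eval_ne_zero_of_mul_eq haniso hr t0
  obtain ⟨h1, h1'⟩ := eval_ne_zero_of_mul_eq haniso hr t1
  simp only [Units.val_mul, Units.val_inv_eq_inv_val, Units.val_mk0, hu', eval_mul]
  field_simp

end Descent

theorem stmt_9_general (k : Type*) [Field k]
    {m : ℕ} (b : Fin m → k)
    (haniso : ∀ (z0 : k) (z : Fin m → k),
      z0 ^ 2 + ∑ i, b i * z i ^ 2 = 0 → z0 = 0 ∧ ∀ i, z i = 0)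
    (f1 f2 : Polynomial k) (g : Fin m → Polynomial k)
    (heq : f1 * f2 = 1 + ∑ i, Polynomial.C (b i) * g i ^ 2) :
    (∀ p : Polynomial k, p.Monic → Irreducible p →
      (∀ (z0 : Polynomial k ⧸ (Ideal.span {p} : Ideal (Polynomial k)))
         (z : Fin m → Polynomial k ⧸ (Ideal.span {p} : Ideal (Polynomial k))),
        z0 ^ 2 + ∑ i, Ideal.Quotient.mk (Ideal.span {p}) (Polynomial.C (b i)) * z i ^ 2 = 0 →
        z0 = 0 ∧ ∀ i, z i = 0) →
      ¬ p ∣ f1 ∧ ¬ p ∣ f2) ∧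
    (∀ t0 t1 : k, f1.eval t0 ≠ 0 ∧ f1.eval t1 ≠ 0 ∧
      ∃ u : kˣ, (u : k) = f1.eval t0 / f1.eval t1 ∧
        u ∈ Subgroup.closure {d : kˣ | ∃ (z0 : k) (z : Fin m → k),
          z0 ^ 2 + ∑ i, b i * z i ^ 2 = (d : k)}) := by
  refine ⟨fun p _ hp hquot => ?_, fun t0 t1 => ?_⟩
  · have h := not_dvd_one_add_sum_mul_sq hp.not_isUnit (fun i => C (b i)) hquot g
    rw [← heq] at h
    exact ⟨fun h1 => h (h1.mul_right f2), fun h2 => h (h2.mul_left f1)⟩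
  · exact ⟨(eval_ne_zero_of_mul_eq haniso heq t0).1, (eval_ne_zero_of_mul_eq haniso heq t1).1,
      exists_unit_eq_eval_div_eval_mem_valueSubgroup haniso heq t0 t1⟩

/-- let `φ = ⟨1, b₃,…,bₙ⟩` be anisotropic over `k` (char 0) and
`f : 𝔸¹ → X` a morphism to the quadric `x₁x₂ = φ(1, x₃,…,xₙ)`, given by polynomials
`f₁, f₂, g₃,…,gₙ` with `f₁f₂ = 1 + ∑ bᵢgᵢ²`. Then at every closed point `P` (monic
irreducible `p`) where `φ` stays anisotropic over the residue field, `v_P(f₁) = v_P(f₂) = 0`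
(i.e. `p ∤ f₁` and `p ∤ f₂`); and all values `f₁(t₀)`, `f₁(t₁)` (`t₀, t₁ ∈ k`) are nonzero
and lie in the same coset of `⟨D(φ_k)⟩ ≤ kˣ`. -/
theorem stmt_9 (k : Type*) [Field k] [CharZero k]
    {m : ℕ} (hm : 1 ≤ m) (b : Fin m → k)
    (haniso : ∀ (z0 : k) (z : Fin m → k),
      z0 ^ 2 + ∑ i, b i * z i ^ 2 = 0 → z0 = 0 ∧ ∀ i, z i = 0)
    (f1 f2 : Polynomial k) (g : Fin m → Polynomial k)
    (heq : f1 * f2 = 1 + ∑ i, Polynomial.C (b i) * g i ^ 2) :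
    (∀ p : Polynomial k, p.Monic → Irreducible p →
      (∀ (z0 : Polynomial k ⧸ (Ideal.span {p} : Ideal (Polynomial k)))
         (z : Fin m → Polynomial k ⧸ (Ideal.span {p} : Ideal (Polynomial k))),
        z0 ^ 2 + ∑ i, Ideal.Quotient.mk (Ideal.span {p}) (Polynomial.C (b i)) * z i ^ 2 = 0 →
        z0 = 0 ∧ ∀ i, z i = 0) →
      ¬ p ∣ f1 ∧ ¬ p ∣ f2) ∧
    (∀ t0 t1 : k, f1.eval t0 ≠ 0 ∧ f1.eval t1 ≠ 0 ∧
      ∃ u : kˣ, (u : k) = f1.eval t0 / f1.eval t1 ∧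
        u ∈ Subgroup.closure {d : kˣ | ∃ (z0 : k) (z : Fin m → k),
          z0 ^ 2 + ∑ i, b i * z i ^ 2 = (d : k)}) :=
  stmt_9_general k b haniso f1 f2 g heq
end

section
/- Let (R, m, κ) be a DVR with fraction field K and valuation v, and let φ = ⟨1⟩ ⊥ (-φ') be a quadratic form over a field k ⊆ R in n-1 variables such that φ_κ is anisotropic. Suppose h₁,...,hₙ ∈ K satisfy h₁h₂ = φ(1, h₃,...,hₙ). If v(hᵢ) ≥ 0 for all i (i.e., the K-point lifts to an R-point), then v(h₁) = v(h₂) = 0. -/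
/-!
The right-hand side `φ(1, h₃, …, hₙ)` is the image of `w = 1 + ∑ bᵢ rᵢ²` with `rᵢ ∈ R`, and the
anisotropy of `φ_κ` makes the residue of `w` nonzero, so `w` is a unit of `R`. Since `h₁, h₂` are
integral with product the unit `w`, both are units of `R`, hence have valuation `0`.
-/

open IsLocalRing

theorem IsLocalRing.isUnit_one_add_sum_mul_sq {R : Type*} [CommRing R] [IsLocalRing R]
    {ι : Type*} [Fintype ι] (c : ι → R)
    (haniso : ∀ (z0 : ResidueField R) (z : ι → ResidueField R),
      z0 ^ 2 + ∑ i, residue R (c i) * z i ^ 2 = 0 → z0 = 0 ∧ ∀ i, z i = 0)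
    (r : ι → R) : IsUnit (1 + ∑ i, c i * r i ^ 2) := by
  rw [← residue_ne_zero_iff_isUnit]
  intro hzero
  refine one_ne_zero (haniso 1 (fun i => residue R (r i)) ?_).1
  simpa only [one_pow, map_add, map_one, map_sum, map_mul, map_pow] using hzero

section Valuation

variable {R K : Type*} [CommRing R] [Field K] [Algebra R K] (v : K → ℤ)

theorem exists_algebraMap_eq_of_valuation_nonneg
    (hvint : ∀ x : K, x ≠ 0 → (0 ≤ v x ↔ ∃ r : R, algebraMap R K r = x))
    {x : K} (hx : 0 ≤ v x) : ∃ r : R, algebraMap R K r = x := by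
  by_cases hx0 : x = 0
  · exact ⟨0, by rw [map_zero, hx0]⟩
  · exact (hvint x hx0).mp hx

theorem valuation_algebraMap_eq_zero_of_isUnit [IsLocalRing R]
    (hvres : ∀ r : R, r ≠ 0 → (0 < v (algebraMap R K r) ↔ residue R r = 0))
    {r : R} (hr : IsUnit r) (hnonneg : 0 ≤ v (algebraMap R K r)) :
    v (algebraMap R K r) = 0 := by
  have hres : residue R r ≠ 0 := (residue_ne_zero_iff_isUnit r).mpr hr
  have : ¬ 0 < v (algebraMap R K r) := fun hpos => hres ((hvres r hr.ne_zero).mp hpos)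
  omega

end Valuation

theorem stmt_10_general (R : Type*) [CommRing R] [IsDomain R] [IsDiscreteValuationRing R]
    (k : Type*) [Field k] [Algebra k R]
    (K : Type*) [Field K] [Algebra R K] [IsFractionRing R K]
    (v : K → ℤ)
    (hvint : ∀ x : K, x ≠ 0 → (0 ≤ v x ↔ ∃ r : R, algebraMap R K r = x))
    (hvres : ∀ r : R, r ≠ 0 →
      (0 < v (algebraMap R K r) ↔ IsLocalRing.residue R r = 0))
    {m : ℕ} (b : Fin m → k)
    (haniso : ∀ (z0 : IsLocalRing.ResidueField R) (z : Fin m → IsLocalRing.ResidueField R),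
      z0 ^ 2 + ∑ i, IsLocalRing.residue R (algebraMap k R (b i)) * z i ^ 2 = 0 →
      z0 = 0 ∧ ∀ i, z i = 0)
    (h1 h2 : K) (h : Fin m → K)
    (heq : h1 * h2 = 1 + ∑ i, algebraMap R K (algebraMap k R (b i)) * h i ^ 2)
    (hlift : 0 ≤ v h1 ∧ 0 ≤ v h2 ∧ ∀ i, 0 ≤ v (h i)) :
    h1 ≠ 0 ∧ h2 ≠ 0 ∧ v h1 = 0 ∧ v h2 = 0 := by
  obtain ⟨hv1, hv2, hv⟩ := hlift
  choose r hr using fun i => exists_algebraMap_eq_of_valuation_nonneg v hvint (hv i)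
  obtain ⟨r1, rfl⟩ := exists_algebraMap_eq_of_valuation_nonneg v hvint hv1
  obtain ⟨r2, rfl⟩ := exists_algebraMap_eq_of_valuation_nonneg v hvint hv2
  have hw := isUnit_one_add_sum_mul_sq (fun i => algebraMap k R (b i)) haniso r
  have hprod : r1 * r2 = 1 + ∑ i, algebraMap k R (b i) * r i ^ 2 := by
    apply IsFractionRing.injective R K
    simp only [map_mul, map_add, map_one, map_sum, map_pow, hr, heq]
  rw [← hprod, IsUnit.mul_iff] at hw
  obtain ⟨hu1, hu2⟩ := hw
  exact ⟨(hu1.map (algebraMap R K)).ne_zero, (hu2.map (algebraMap R K)).ne_zero,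
    valuation_algebraMap_eq_zero_of_isUnit v hvres hu1 hv1,
    valuation_algebraMap_eq_zero_of_isUnit v hvres hu2 hv2⟩

/-- if `φ = ⟨1, b₃,…,bₙ⟩` has anisotropic reduction over the residue field
and `h₁h₂ = φ(1, h₃,…,hₙ)` in `K`, with all `hᵢ` lifting to `R` (i.e. `v(hᵢ) ≥ 0`),
then `v(h₁) = v(h₂) = 0`. -/
theorem stmt_10 (R : Type*) [CommRing R] [IsDomain R] [IsDiscreteValuationRing R]
    (k : Type*) [Field k] [Algebra k R]
    (K : Type*) [Field K] [Algebra R K] [IsFractionRing R K]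
    (v : K → ℤ)
    (hv0 : v 0 = 0)
    (hvmul : ∀ x y : K, x ≠ 0 → y ≠ 0 → v (x * y) = v x + v y)
    (hvadd : ∀ x y : K, x ≠ 0 → y ≠ 0 → x + y ≠ 0 → min (v x) (v y) ≤ v (x + y))
    (hvint : ∀ x : K, x ≠ 0 → (0 ≤ v x ↔ ∃ r : R, algebraMap R K r = x))
    (hvres : ∀ r : R, r ≠ 0 →
      (0 < v (algebraMap R K r) ↔ IsLocalRing.residue R r = 0))
    {m : ℕ} (b : Fin m → k)
    (haniso : ∀ (z0 : IsLocalRing.ResidueField R) (z : Fin m → IsLocalRing.ResidueField R),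
      z0 ^ 2 + ∑ i, IsLocalRing.residue R (algebraMap k R (b i)) * z i ^ 2 = 0 →
      z0 = 0 ∧ ∀ i, z i = 0)
    (h1 h2 : K) (h : Fin m → K)
    (heq : h1 * h2 = 1 + ∑ i, algebraMap R K (algebraMap k R (b i)) * h i ^ 2)
    (hlift : 0 ≤ v h1 ∧ 0 ≤ v h2 ∧ ∀ i, 0 ≤ v (h i)) :
    h1 ≠ 0 ∧ h2 ≠ 0 ∧ v h1 = 0 ∧ v h2 = 0 :=
  stmt_10_general R k K v hvint hvres b haniso h1 h2 h heq hlift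
end

section
/- Let (R, m, κ) be a DVR with fraction field K and valuation v, and let φ = ⟨1, b₃,...,bₙ⟩ be a quadratic form with coefficients in a field k ⊆ R such that φ_κ is anisotropic. Suppose h₁,...,hₙ ∈ K satisfy h₁h₂ = 1 + Σᵢ₌₃ⁿ bᵢhᵢ², and suppose min{v(h₁), v(h₂)} < 0 or some v(hᵢ) < 0. Then min{v(h₁), v(h₂)} = min{v(h₁), v(h₂), ..., v(hₙ)}. -/
/-!
Let `t = 1` if every `v hᵢ ≥ 0`, and `t = hᵢ⁻¹` for an `hᵢ` of least valuation otherwise, so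
that `v t = -min(0, v h₃, …, v hₙ)`. Then `(t, t h₃, …, t hₙ)` is an integral vector with a
coordinate equal to `1`, so anisotropy of `φ_κ` makes its value `t² h₁h₂` a unit. Hence
`v h₁ + v h₂ = -2 v t ≤ 2 v hᵢ`, and `min (v h₁) (v h₂) ≤ v hᵢ`.
-/

open Finset IsLocalRing

/-- The diagonal quadratic form `⟨1, c₁, …, cₘ⟩`, evaluated at `(x₀, x)`. -/
def diagForm {S ι : Type*} [CommSemiring S] [Fintype ι] (c : ι → S) (x₀ : S) (x : ι → S) : S :=
  x₀ ^ 2 + ∑ i, c i * x i ^ 2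

section DiagForm

variable {S T ι : Type*} [CommSemiring S] [CommSemiring T] [Fintype ι]

theorem map_diagForm (f : S →+* T) (c : ι → S) (x₀ : S) (x : ι → S) :
    f (diagForm c x₀ x) = diagForm (fun i => f (c i)) (f x₀) (fun i => f (x i)) := by
  simp [diagForm]

theorem diagForm_mul_left (c : ι → S) (a x₀ : S) (x : ι → S) :
    diagForm c (a * x₀) (fun i => a * x i) = a ^ 2 * diagForm c x₀ x := by
  simp only [diagForm, mul_add, mul_sum]
  congr 1
  · ring
  · exact sum_congr rfl fun i _ => by ring

end DiagForm

theorem isUnit_diagForm {R ι : Type*} [CommRing R] [IsLocalRing R] [Fintype ι] (c : ι → R)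
    (haniso : ∀ (z₀ : ResidueField R) (z : ι → ResidueField R),
      diagForm (fun i => residue R (c i)) z₀ z = 0 → z₀ = 0 ∧ ∀ i, z i = 0)
    {x₀ : R} {x : ι → R} (hprim : IsUnit x₀ ∨ ∃ i, IsUnit (x i)) :
    IsUnit (diagForm c x₀ x) := by
  rw [← residue_ne_zero_iff_isUnit]
  intro hQ
  obtain ⟨h₀, h⟩ := haniso _ _ ((map_diagForm (residue R) c x₀ x).symm.trans hQ)
  rcases hprim with hx₀ | ⟨i, hxi⟩
  · exact (residue_ne_zero_iff_isUnit x₀).mpr hx₀ h₀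
  · exact (residue_ne_zero_iff_isUnit (x i)).mpr hxi (h i)

section Valuation

variable {K : Type*} [Field K] (v : K → ℤ)

theorem val_one (hvmul : ∀ x y : K, x ≠ 0 → y ≠ 0 → v (x * y) = v x + v y) : v 1 = 0 := by
  have := hvmul 1 1 one_ne_zero one_ne_zero
  rw [mul_one] at this
  omega

theorem val_inv (hvmul : ∀ x y : K, x ≠ 0 → y ≠ 0 → v (x * y) = v x + v y) {x : K}
    (hx : x ≠ 0) : v x⁻¹ = -v x := by
  have := hvmul x x⁻¹ hx (inv_ne_zero hx)
  rw [mul_inv_cancel₀ hx, val_one v hvmul] at this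
  omega

/-- Scaling by `t` clears the denominators of `h` and makes `(t, t • h)` primitive. -/
theorem exists_primitive_scaling (hvmul : ∀ x y : K, x ≠ 0 → y ≠ 0 → v (x * y) = v x + v y)
    {ι : Type*} [Fintype ι] (h : ι → K) :
    ∃ t : K, t ≠ 0 ∧ 0 ≤ v t ∧ (∀ i, h i ≠ 0 → -v t ≤ v (h i)) ∧
      (t = 1 ∨ ∃ i, t * h i = 1) := by
  classical
  set s := univ.filter fun i => h i ≠ 0 ∧ v (h i) < 0
  rcases s.eq_empty_or_nonempty with hs | hs
  · refine ⟨1, one_ne_zero, (val_one v hvmul).ge, fun i hi => ?_, Or.inl rfl⟩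
    have : i ∉ s := by simp [hs]
    simp only [s, mem_filter, mem_univ, true_and, not_and, not_lt] at this
    rw [val_one v hvmul, neg_zero]
    exact this hi
  obtain ⟨i₀, hi₀, hmin⟩ := s.exists_min_image (fun i => v (h i)) hs
  simp only [s, mem_filter, mem_univ, true_and] at hi₀ hmin
  refine ⟨(h i₀)⁻¹, inv_ne_zero hi₀.1, ?_, fun i hi => ?_, Or.inr ⟨i₀, inv_mul_cancel₀ hi₀.1⟩⟩
  · rw [val_inv v hvmul hi₀.1]
    omega
  · rw [val_inv v hvmul hi₀.1, neg_neg]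
    by_cases hneg : v (h i) < 0
    · exact hmin i ⟨hi, hneg⟩
    · omega

variable {R : Type*} [CommRing R] [Algebra R K]

theorem isUnit_iff_val_nonpos [IsLocalRing R]
    (hvres : ∀ r : R, r ≠ 0 → (0 < v (algebraMap R K r) ↔ residue R r = 0))
    {r : R} (hr : algebraMap R K r ≠ 0) : IsUnit r ↔ v (algebraMap R K r) ≤ 0 := by
  have hr₀ : r ≠ 0 := by
    rintro rfl
    exact hr (map_zero _)
  rw [← residue_ne_zero_iff_isUnit, ← not_lt, hvres r hr₀]

theorem isUnit_of_algebraMap_eq_one [IsLocalRing R]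
    (hvmul : ∀ x y : K, x ≠ 0 → y ≠ 0 → v (x * y) = v x + v y)
    (hvres : ∀ r : R, r ≠ 0 → (0 < v (algebraMap R K r) ↔ residue R r = 0))
    {r : R} (hr : algebraMap R K r = 1) : IsUnit r := by
  rw [isUnit_iff_val_nonpos v hvres (hr ▸ one_ne_zero), hr, val_one v hvmul]

theorem exists_algebraMap_eq_mul
    (hvmul : ∀ x y : K, x ≠ 0 → y ≠ 0 → v (x * y) = v x + v y)
    (hvint : ∀ x : K, x ≠ 0 → (0 ≤ v x ↔ ∃ r : R, algebraMap R K r = x))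
    {t x : K} (ht : t ≠ 0) (hx : x ≠ 0 → -v t ≤ v x) : ∃ r : R, algebraMap R K r = t * x := by
  rcases eq_or_ne x 0 with rfl | hx₀
  · exact ⟨0, by rw [map_zero, mul_zero]⟩
  refine (hvint _ (mul_ne_zero ht hx₀)).mp ?_
  rw [hvmul t x ht hx₀]
  linarith [hx hx₀]

end Valuation

theorem stmt_11_general (R : Type*) [CommRing R] [IsDomain R] [IsDiscreteValuationRing R]
    (k : Type*) [Field k] [Algebra k R]
    (K : Type*) [Field K] [Algebra R K]
    (v : K → ℤ)
    (hvmul : ∀ x y : K, x ≠ 0 → y ≠ 0 → v (x * y) = v x + v y)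
    (hvint : ∀ x : K, x ≠ 0 → (0 ≤ v x ↔ ∃ r : R, algebraMap R K r = x))
    (hvres : ∀ r : R, r ≠ 0 →
      (0 < v (algebraMap R K r) ↔ IsLocalRing.residue R r = 0))
    {m : ℕ} (b : Fin m → k)
    (haniso : ∀ (z0 : IsLocalRing.ResidueField R) (z : Fin m → IsLocalRing.ResidueField R),
      z0 ^ 2 + ∑ i, IsLocalRing.residue R (algebraMap k R (b i)) * z i ^ 2 = 0 →
      z0 = 0 ∧ ∀ i, z i = 0)
    (h1 h2 : K) (h : Fin m → K)
    (heq : h1 * h2 = 1 + ∑ i, algebraMap R K (algebraMap k R (b i)) * h i ^ 2)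
    (hnolift : (h1 ≠ 0 ∧ v h1 < 0) ∨ (h2 ≠ 0 ∧ v h2 < 0) ∨ ∃ i, h i ≠ 0 ∧ v (h i) < 0) :
    h1 ≠ 0 ∧ h2 ≠ 0 ∧ min (v h1) (v h2) < 0 ∧
      ∀ i, h i ≠ 0 → min (v h1) (v h2) ≤ v (h i) := by
  obtain ⟨t, ht, hvt, hth, hprim⟩ := exists_primitive_scaling v hvmul h
  obtain ⟨r₀, hr₀⟩ := (hvint t ht).mp hvt
  choose r hr using fun i => exists_algebraMap_eq_mul v hvmul hvint ht (hth i)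
  have hunit : IsUnit (diagForm (fun i => algebraMap k R (b i)) r₀ r) := by
    refine isUnit_diagForm _ haniso ?_
    rcases hprim with rfl | ⟨i, hi⟩
    · exact Or.inl (isUnit_of_algebraMap_eq_one v hvmul hvres hr₀)
    · exact Or.inr ⟨i, isUnit_of_algebraMap_eq_one v hvmul hvres ((hr i).trans hi)⟩
  have hQ : algebraMap R K (diagForm (fun i => algebraMap k R (b i)) r₀ r) = t ^ 2 * (h1 * h2) := by
    rw [map_diagForm, hr₀, funext hr]
    nth_rw 1 [← mul_one t]
    rw [diagForm_mul_left, heq, diagForm, one_pow]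
  have hQ₀ : t ^ 2 * (h1 * h2) ≠ 0 := hQ ▸ (hunit.map (algebraMap R K)).ne_zero
  have hvQ := (isUnit_iff_val_nonpos v hvres (hQ ▸ hQ₀)).mp hunit
  obtain ⟨h1₀, h2₀⟩ := mul_ne_zero_iff.mp (right_ne_zero_of_mul hQ₀)
  rw [hQ, hvmul _ _ (pow_ne_zero 2 ht) (mul_ne_zero h1₀ h2₀), pow_two, hvmul t t ht ht,
    hvmul h1 h2 h1₀ h2₀] at hvQ
  refine ⟨h1₀, h2₀, ?_, fun i hi => by have := hth i hi; omega⟩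
  rcases hnolift with ⟨-, hneg⟩ | ⟨-, hneg⟩ | ⟨i, hi, hneg⟩
  · omega
  · omega
  · have := hth i hi; omega

/-- with `φ = ⟨1, b₃,…,bₙ⟩` of anisotropic reduction and
`h₁h₂ = 1 + ∑ bᵢhᵢ²` in `K`, if the point does not lift to `R` (some valuation is
negative), then `min{v(h₁), v(h₂)} = min{v(h₁),…,v(hₙ)}`, i.e. `h₁, h₂ ≠ 0` and
`min (v h₁) (v h₂) ≤ v(hᵢ)` for every nonzero `hᵢ`. -/
theorem stmt_11 (R : Type*) [CommRing R] [IsDomain R] [IsDiscreteValuationRing R]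
    (k : Type*) [Field k] [Algebra k R]
    (K : Type*) [Field K] [Algebra R K] [IsFractionRing R K]
    (v : K → ℤ)
    (hv0 : v 0 = 0)
    (hvmul : ∀ x y : K, x ≠ 0 → y ≠ 0 → v (x * y) = v x + v y)
    (hvadd : ∀ x y : K, x ≠ 0 → y ≠ 0 → x + y ≠ 0 → min (v x) (v y) ≤ v (x + y))
    (hvint : ∀ x : K, x ≠ 0 → (0 ≤ v x ↔ ∃ r : R, algebraMap R K r = x))
    (hvres : ∀ r : R, r ≠ 0 →
      (0 < v (algebraMap R K r) ↔ IsLocalRing.residue R r = 0))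
    {m : ℕ} (b : Fin m → k)
    (haniso : ∀ (z0 : IsLocalRing.ResidueField R) (z : Fin m → IsLocalRing.ResidueField R),
      z0 ^ 2 + ∑ i, IsLocalRing.residue R (algebraMap k R (b i)) * z i ^ 2 = 0 →
      z0 = 0 ∧ ∀ i, z i = 0)
    (h1 h2 : K) (h : Fin m → K)
    (heq : h1 * h2 = 1 + ∑ i, algebraMap R K (algebraMap k R (b i)) * h i ^ 2)
    (hnolift : (h1 ≠ 0 ∧ v h1 < 0) ∨ (h2 ≠ 0 ∧ v h2 < 0) ∨ ∃ i, h i ≠ 0 ∧ v (h i) < 0) :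
    h1 ≠ 0 ∧ h2 ≠ 0 ∧ min (v h1) (v h2) < 0 ∧
      ∀ i, h i ≠ 0 → min (v h1) (v h2) ≤ v (h i) :=
  stmt_11_general R k K v hvmul hvint hvres b haniso h1 h2 h heq hnolift
end
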